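/- arXiv:2010.11537 — 3 statements merged into one kernel-verified Lean document; each statement's English description precedes it below -/
import Mathlib

section
/- Let φ : ℝ → ℝ be a probability density function that is symmetric (φ(-x) = φ(x)), unimodal (non-increasing on [0,∞)), and has unit second moment (∫ x²φ(x) dx = 1). Define Φ(t) = ∫_{-t}^{t} φ(x) dx. Then Φ(1) ≥ 2/(3√3). -/
open MeasureTheory

theorem stmt_0 (φ : ℝ → ℝ) (hnn : ∀ x, 0 ≤ φ x) (hint : Integrable φ)
    (hprob : ∫ x, φ x = 1) (hsym : ∀ x, φ (-x) = φ x)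
    (hmono : AntitoneOn φ (Set.Ici 0))
    (hvar : ∫ x, x ^ 2 * φ x = 1) :
    2 / (3 * Real.sqrt 3) ≤ ∫ x in (-1 : ℝ)..1, φ x := by
  have hs3 : Real.sqrt 3 * Real.sqrt 3 = 3 := Real.mul_self_sqrt (by norm_num)
  have hs3nn : (0:ℝ) ≤ Real.sqrt 3 := Real.sqrt_nonneg 3
  have h1s3 : (1:ℝ) ≤ Real.sqrt 3 := by nlinarith
  set c := φ 1 with hc
  have hcnn : 0 ≤ c := hnn 1
  have habs : ∀ x : ℝ, φ x = φ |x| := by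
    intro x
    rcases abs_cases x with ⟨h, _⟩ | ⟨h, _⟩
    · rw [h]
    · rw [h, hsym]
  have hint2 : Integrable (fun x : ℝ => x ^ 2 * φ x) := by
    by_contra h
    rw [integral_undef h] at hvar
    norm_num at hvar
  have hub : ∀ x : ℝ, 1 ≤ |x| → φ x ≤ c := by
    intro x hx
    rw [habs x]
    exact hmono (Set.mem_Ici.mpr (by norm_num)) (Set.mem_Ici.mpr (abs_nonneg x)) hx
  have hlb : ∀ x : ℝ, |x| ≤ 1 → c ≤ φ x := by
    intro x hx
    rw [habs x]
    exact hmono (Set.mem_Ici.mpr (abs_nonneg x)) (Set.mem_Ici.mpr (by norm_num)) hx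
  -- splitting the integral
  have hsplit : (∫ x in Set.Ioo (-(Real.sqrt 3)) (Real.sqrt 3), φ x)
      + ∫ x in (Set.Ioo (-(Real.sqrt 3)) (Real.sqrt 3))ᶜ, φ x = 1 := by
    rw [integral_add_compl measurableSet_Ioo hint, hprob]
  have hIoo : (∫ x in Set.Ioo (-(Real.sqrt 3)) (Real.sqrt 3), φ x)
      = (∫ x in (-(Real.sqrt 3))..(-1:ℝ), φ x) + (∫ x in (-1:ℝ)..1, φ x)
        + ∫ x in (1:ℝ)..(Real.sqrt 3), φ x := by
    rw [intervalIntegral.integral_add_adjacent_intervals hint.intervalIntegrable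
      hint.intervalIntegrable,
      intervalIntegral.integral_add_adjacent_intervals hint.intervalIntegrable
      hint.intervalIntegrable,
      intervalIntegral.integral_of_le (by linarith), integral_Ioc_eq_integral_Ioo]
  -- bound on (-√3, -1]
  have T1 : (∫ x in (-(Real.sqrt 3))..(-1:ℝ), φ x) ≤ (Real.sqrt 3 - 1) * c := by
    have := intervalIntegral.integral_mono_on (μ := volume) (f := φ)
      (g := fun _ => c) (by linarith : -(Real.sqrt 3) ≤ (-1:ℝ))
      hint.intervalIntegrable intervalIntegrable_const
      (fun x hx => hub x (le_abs.mpr (Or.inr (by linarith [hx.2]))))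
    simpa [mul_comm] using this.trans_eq (by rw [intervalIntegral.integral_const, smul_eq_mul]; ring)
  have T3 : (∫ x in (1:ℝ)..(Real.sqrt 3), φ x) ≤ (Real.sqrt 3 - 1) * c := by
    have := intervalIntegral.integral_mono_on (μ := volume) (f := φ)
      (g := fun _ => c) (by linarith : (1:ℝ) ≤ Real.sqrt 3)
      hint.intervalIntegrable intervalIntegrable_const
      (fun x hx => hub x (le_abs.mpr (Or.inl hx.1)))
    simpa [mul_comm] using this.trans_eq (by rw [intervalIntegral.integral_const, smul_eq_mul]; ring)
  have T2 : 2 * c ≤ ∫ x in (-1:ℝ)..1, φ x := by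
    have := intervalIntegral.integral_mono_on (μ := volume) (f := fun _ => c)
      (g := φ) (by norm_num : (-1:ℝ) ≤ 1)
      intervalIntegrable_const hint.intervalIntegrable
      (fun x hx => hlb x (abs_le.mpr ⟨hx.1, hx.2⟩))
    calc 2 * c = ∫ _ in (-1:ℝ)..1, c := by rw [intervalIntegral.integral_const, smul_eq_mul]; ring
    _ ≤ _ := this
  -- tail bound
  have T4 : (∫ x in (Set.Ioo (-(Real.sqrt 3)) (Real.sqrt 3))ᶜ, φ x) ≤ 1 / 3 := by
    have hkey : ∀ x ∈ (Set.Ioo (-(Real.sqrt 3)) (Real.sqrt 3))ᶜ, φ x ≤ x ^ 2 * φ x / 3 := by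
      intro x hx
      simp only [Set.mem_compl_iff, Set.mem_Ioo, not_and_or, not_lt] at hx
      have h3x : 3 ≤ x ^ 2 := by
        rcases hx with hx | hx
        · nlinarith
        · nlinarith
      nlinarith [hnn x]
    calc (∫ x in (Set.Ioo (-(Real.sqrt 3)) (Real.sqrt 3))ᶜ, φ x)
        ≤ ∫ x in (Set.Ioo (-(Real.sqrt 3)) (Real.sqrt 3))ᶜ, x ^ 2 * φ x / 3 :=
          setIntegral_mono_on hint.integrableOn (hint2.div_const 3).integrableOn
            measurableSet_Ioo.compl hkey
      _ ≤ ∫ x, x ^ 2 * φ x / 3 :=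
          setIntegral_le_integral (hint2.div_const 3)
            (Filter.Eventually.of_forall (fun x => div_nonneg (mul_nonneg (sq_nonneg x) (hnn x)) (by norm_num)))
      _ = 1 / 3 := by rw [integral_div, hvar]
  rw [div_le_iff₀ (by positivity)]
  nlinarith [hsplit, hIoo, T1, T2, T3, T4]
end

section
/- Let 0 < σ₁ ≤ σ₂ ≤ ⋯ ≤ σₙ be positive reals and let 1 ≤ K ≤ n be an integer. Suppose that Σ_{i=K+1}^{n} 1/σᵢ ≥ (1/c - 1)·Σ_{i=1}^{K} 1/σᵢ for some 0 < c < 1. Then for every j with 1 ≤ j ≤ K, c⁻¹·Σ_{i=j}^{n} 1/σᵢ ≥ (c⁻¹ - 1)·Σ_{i=1}^{n} 1/σᵢ, and consequently max_{1 ≤ j ≤ K} (K - j + 1)/Σ_{i=j}^{n} σᵢ⁻¹ ≤ (1/(1-c))·K/Σ_{i=1}^{n} σᵢ⁻¹. -/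
open Finset

theorem stmt_6 (n K : ℕ) (hK1 : 1 ≤ K) (hKn : K ≤ n) (σ : ℕ → ℝ)
    (hpos : ∀ i ∈ Icc 1 n, 0 < σ i)
    (hmono : ∀ i ∈ Icc 1 n, ∀ j ∈ Icc 1 n, i ≤ j → σ i ≤ σ j)
    (c : ℝ) (hc0 : 0 < c) (hc1 : c < 1)
    (hyp : (1 / c - 1) * ∑ i ∈ Icc 1 K, (σ i)⁻¹ ≤ ∑ i ∈ Icc (K + 1) n, (σ i)⁻¹) :
    (∀ j ∈ Icc 1 K,
        (c⁻¹ - 1) * ∑ i ∈ Icc 1 n, (σ i)⁻¹ ≤ c⁻¹ * ∑ i ∈ Icc j n, (σ i)⁻¹) ∧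
    (∀ j ∈ Icc 1 K,
        ((K : ℝ) - j + 1) / ∑ i ∈ Icc j n, (σ i)⁻¹ ≤
          (1 / (1 - c)) * ((K : ℝ) / ∑ i ∈ Icc 1 n, (σ i)⁻¹)) := by
  have hSpos : 0 < ∑ i ∈ Icc 1 n, (σ i)⁻¹ :=
    Finset.sum_pos (fun i hi => inv_pos.mpr (hpos i hi))
      (Finset.nonempty_Icc.mpr (hK1.trans hKn))
  have h1c : 0 < 1 - c := by linarith
  have hsplit : ∑ i ∈ Icc 1 K, (σ i)⁻¹ + ∑ i ∈ Icc (K + 1) n, (σ i)⁻¹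
      = ∑ i ∈ Icc 1 n, (σ i)⁻¹ := by
    rw [Finset.Icc_add_one_left_eq_Ioc, show (1:ℕ) = 0 + 1 from rfl, Finset.Icc_add_one_left_eq_Ioc, Finset.Icc_add_one_left_eq_Ioc]
    exact Finset.sum_Ioc_consecutive _ (Nat.zero_le K) hKn
  have key : ∀ j ∈ Icc 1 K,
      (c⁻¹ - 1) * ∑ i ∈ Icc 1 n, (σ i)⁻¹ ≤ c⁻¹ * ∑ i ∈ Icc j n, (σ i)⁻¹ := by
    intro j hj
    obtain ⟨hj1, hjK⟩ := Finset.mem_Icc.mp hj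
    have hBT : ∑ i ∈ Icc (K + 1) n, (σ i)⁻¹ ≤ ∑ i ∈ Icc j n, (σ i)⁻¹ := by
      apply Finset.sum_le_sum_of_subset_of_nonneg
        (Finset.Icc_subset_Icc_left (by omega))
      intro i hi _
      exact le_of_lt (inv_pos.mpr (hpos i (Finset.mem_Icc.mp hi |> fun h =>
        Finset.mem_Icc.mpr ⟨by omega, h.2⟩)))
    have hA : 0 ≤ ∑ i ∈ Icc 1 K, (σ i)⁻¹ :=
      Finset.sum_nonneg fun i hi => le_of_lt (inv_pos.mpr (hpos i
        (Finset.mem_Icc.mpr ⟨(Finset.mem_Icc.mp hi).1,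
          (Finset.mem_Icc.mp hi).2.trans hKn⟩)))
    have hcinv : 1 / c - 1 = c⁻¹ - 1 := by rw [one_div]
    rw [hcinv] at hyp
    have hcinv1 : (1:ℝ) ≤ c⁻¹ := one_le_inv_iff₀.mpr ⟨hc0, le_of_lt hc1⟩
    nlinarith [hBT, hyp, hsplit]
  refine ⟨key, fun j hj => ?_⟩
  obtain ⟨hj1, hjK⟩ := Finset.mem_Icc.mp hj
  have hTpos : 0 < ∑ i ∈ Icc j n, (σ i)⁻¹ := by
    apply Finset.sum_pos
    · intro i hi
      obtain ⟨h1, h2⟩ := Finset.mem_Icc.mp hi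
      exact inv_pos.mpr (hpos i (Finset.mem_Icc.mpr ⟨by omega, h2⟩))
    · exact Finset.nonempty_Icc.mpr (hjK.trans hKn)
  have hkey := key j hj
  have hT : (1 - c) * ∑ i ∈ Icc 1 n, (σ i)⁻¹ ≤ ∑ i ∈ Icc j n, (σ i)⁻¹ := by
    have := mul_le_mul_of_nonneg_left hkey (le_of_lt hc0)
    have hc' : c * c⁻¹ = 1 := mul_inv_cancel₀ (ne_of_gt hc0)
    nlinarith
  have hjK' : (j : ℝ) ≥ 1 := by exact_mod_cast hj1
  have hnum : (K : ℝ) - j + 1 ≤ K := by linarith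
  have hnum0 : 0 ≤ (K : ℝ) - j + 1 := by
    have : (j : ℝ) ≤ K := by exact_mod_cast hjK
    linarith
  rw [div_le_iff₀ hTpos, one_div, mul_comm]
  have h2 : (1:ℝ) ≤ (∑ i ∈ Icc j n, (σ i)⁻¹) / ((1 - c) * ∑ i ∈ Icc 1 n, (σ i)⁻¹) :=
    (one_le_div (mul_pos h1c hSpos)).mpr hT
  calc (K:ℝ) - j + 1 ≤ (K:ℝ) := hnum
    _ = 1 * K := (one_mul _).symm
    _ ≤ (∑ i ∈ Icc j n, (σ i)⁻¹) / ((1 - c) * ∑ i ∈ Icc 1 n, (σ i)⁻¹) * K :=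
        mul_le_mul_of_nonneg_right h2 (Nat.cast_nonneg K)
    _ = (∑ i ∈ Icc j n, (σ i)⁻¹) * ((1 - c)⁻¹ * ((K:ℝ) / ∑ i ∈ Icc 1 n, (σ i)⁻¹)) := by
        field_simp
end

section
/- Let X₁, …, Xₙ be independent random variables where Xᵢ has density (1/σᵢ)φ(x/σᵢ), with φ a symmetric unimodal density of unit variance, and 0 < σ₁ ≤ ⋯ ≤ σₙ. Fix s > 0 and let m_s = max{m ∈ [n] : σ_m ≤ s} (assume σ₁ ≤ s so m_s is well-defined). Then for any x with |x| ≥ (1 + √(2/Φ(1)))·s, we have Σ_{i=1}^{n} P(Xᵢ ∈ [x-s, x+s]) ≤ m_s·Φ(1)/2 + Σ_{i > m_s} P(Xᵢ ∈ [-s, s]), where Φ(t) = ∫_{-t}^{t} φ. -/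
open MeasureTheory Finset

section aux
variable {φ : ℝ → ℝ}

lemma aux_shift (hint : Integrable φ)
    (hmono : AntitoneOn φ (Set.Ici 0)) {a c : ℝ} (ha : 0 ≤ a) (hc : 0 ≤ c) :
    ∫ t in (0:ℝ)..c, φ (t + a) ≤ ∫ t in (0:ℝ)..c, φ t := by
  apply intervalIntegral.integral_mono_on hc
  · simpa using (hint.intervalIntegrable (a := a) (b := c + a)).comp_add_right a
  · exact hint.intervalIntegrable
  · intro t ht
    exact hmono (Set.mem_Ici.mpr ht.1) (Set.mem_Ici.mpr (by linarith [ht.1])) (by linarith)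

lemma aux_neg (hsym : ∀ x, φ (-x) = φ x) (a b : ℝ) :
    ∫ y in (-b)..(-a), φ y = ∫ y in a..b, φ y := by
  rw [← intervalIntegral.integral_comp_neg (f := φ)]
  simp only [hsym]

lemma aux_centered (hint : Integrable φ) (hsym : ∀ x, φ (-x) = φ x)
    (hmono : AntitoneOn φ (Set.Ici 0)) {a c : ℝ} (ha : 0 ≤ a) (hc : 0 ≤ c) :
    ∫ y in a..(a + 2*c), φ y ≤ ∫ y in (-c)..c, φ y := by
  have h1 : ∫ y in a..(a + 2*c), φ y = ∫ t in (0:ℝ)..(2*c), φ (t + a) := by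
    rw [intervalIntegral.integral_comp_add_right]; ring_nf
  have h2 : ∫ t in (0:ℝ)..(2*c), φ (t + a) ≤ ∫ t in (0:ℝ)..(2*c), φ t :=
    aux_shift hint hmono ha (by linarith)
  have h3 : ∫ t in (0:ℝ)..(2*c), φ t
      = (∫ t in (0:ℝ)..c, φ t) + ∫ t in c..(2*c), φ t :=
    (intervalIntegral.integral_add_adjacent_intervals hint.intervalIntegrable
      hint.intervalIntegrable).symm
  have h4 : ∫ t in c..(2*c), φ t = ∫ t in (0:ℝ)..c, φ (t + c) := by
    rw [intervalIntegral.integral_comp_add_right]; ring_nf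
  have h5 : ∫ t in (0:ℝ)..c, φ (t + c) ≤ ∫ t in (0:ℝ)..c, φ t :=
    aux_shift hint hmono hc hc
  have h6 : ∫ y in (-c)..c, φ y
      = (∫ y in (-c)..(0:ℝ), φ y) + ∫ y in (0:ℝ)..c, φ y :=
    (intervalIntegral.integral_add_adjacent_intervals hint.intervalIntegrable
      hint.intervalIntegrable).symm
  have h7 : ∫ y in (-c)..(0:ℝ), φ y = ∫ y in (0:ℝ)..c, φ y := by
    simpa using aux_neg hsym 0 c
  linarith

lemma aux_I2 (hvar : ∫ x, x ^ 2 * φ x = 1) : Integrable (fun x => x ^ 2 * φ x) := by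
  by_contra h
  rw [integral_undef h] at hvar; norm_num at hvar

lemma aux_cheb (hnn : ∀ x, 0 ≤ φ x) (hint : Integrable φ)
    (hvar : ∫ x, x ^ 2 * φ x = 1) {t a b : ℝ} (ht : 0 < t) (hta : t ≤ a) (hab : a ≤ b) :
    ∫ y in a..b, φ y ≤ 1 / t ^ 2 := by
  have I2 := aux_I2 hvar
  have h1 : ∫ y in a..b, φ y ≤ ∫ y in a..b, y ^ 2 * φ y / t ^ 2 := by
    apply intervalIntegral.integral_mono_on hab hint.intervalIntegrable
    · exact (I2.div_const _).intervalIntegrable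
    · intro y hy
      rw [le_div_iff₀ (by positivity)]
      have hty : t ≤ y := le_trans hta hy.1
      have ht2 : t ^ 2 ≤ y ^ 2 := by nlinarith
      nlinarith [mul_le_mul_of_nonneg_left ht2 (hnn y)]
  have h2 : ∫ y in a..b, y ^ 2 * φ y / t ^ 2 = (∫ y in a..b, y ^ 2 * φ y) / t ^ 2 :=
    intervalIntegral.integral_div _ _
  have h3 : ∫ y in a..b, y ^ 2 * φ y ≤ 1 := by
    rw [intervalIntegral.integral_of_le hab, ← hvar]
    exact setIntegral_le_integral I2 (Filter.Eventually.of_forall fun y => mul_nonneg (by positivity) (hnn y))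
  rw [h2] at h1
  calc ∫ y in a..b, φ y ≤ (∫ y in a..b, y ^ 2 * φ y) / t ^ 2 := h1
    _ ≤ 1 / t ^ 2 := by gcongr

lemma aux_phi_pos (hnn : ∀ x, 0 ≤ φ x) (hint : Integrable φ)
    (hprob : ∫ x, φ x = 1) (hsym : ∀ x, φ (-x) = φ x)
    (hmono : AntitoneOn φ (Set.Ici 0)) (hvar : ∫ x, x ^ 2 * φ x = 1) :
    0 < ∫ y in (-1 : ℝ)..1, φ y := by
  have I2 := aux_I2 hvar
  set S : Set ℝ := Set.Ioc (-2 : ℝ) 2 with hSdef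
  have hS : MeasurableSet S := measurableSet_Ioc
  have htail : ∫ y in Sᶜ, φ y ≤ 1/4 := by
    have h1 : ∫ y in Sᶜ, φ y ≤ ∫ y in Sᶜ, y ^ 2 * φ y / 4 := by
      apply setIntegral_mono_on hint.integrableOn ((I2.div_const 4).integrableOn) hS.compl
      intro y hy
      simp only [hSdef, Set.mem_compl_iff, Set.mem_Ioc, not_and_or, not_lt, not_le] at hy
      rw [le_div_iff₀ (by norm_num)]
      have ht2 : (4:ℝ) ≤ y ^ 2 := by rcases hy with hy | hy <;> nlinarith
      nlinarith [mul_le_mul_of_nonneg_left ht2 (hnn y)]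
    have h2 : ∫ y in Sᶜ, y ^ 2 * φ y / 4 = (∫ y in Sᶜ, y ^ 2 * φ y) / 4 := integral_div _ _
    have h3 : ∫ y in Sᶜ, y ^ 2 * φ y ≤ 1 := by
      rw [← hvar]
      exact setIntegral_le_integral I2 (Filter.Eventually.of_forall fun y => mul_nonneg (by positivity) (hnn y))
    rw [h2] at h1
    linarith
  have hsplit : (∫ y in S, φ y) + ∫ y in Sᶜ, φ y = 1 := by
    rw [integral_add_compl hS hint, hprob]
  have hSint : ∫ y in S, φ y = ∫ y in (-2:ℝ)..2, φ y :=
    (intervalIntegral.integral_of_le (by norm_num)).symm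
  have e1 : ∫ y in (-2:ℝ)..2, φ y
      = (∫ y in (-2:ℝ)..(0:ℝ), φ y) + ∫ y in (0:ℝ)..2, φ y :=
    (intervalIntegral.integral_add_adjacent_intervals hint.intervalIntegrable
      hint.intervalIntegrable).symm
  have e2 : ∫ y in (-2:ℝ)..(0:ℝ), φ y = ∫ y in (0:ℝ)..2, φ y := by
    simpa using aux_neg hsym 0 2
  have e3 : ∫ y in (0:ℝ)..2, φ y
      = (∫ y in (0:ℝ)..1, φ y) + ∫ y in (1:ℝ)..2, φ y :=
    (intervalIntegral.integral_add_adjacent_intervals hint.intervalIntegrable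
      hint.intervalIntegrable).symm
  have e4 : ∫ y in (1:ℝ)..2, φ y ≤ ∫ y in (0:ℝ)..1, φ y := by
    have h : ∫ y in (1:ℝ)..2, φ y = ∫ y in (0:ℝ)..1, φ (y + 1) := by
      rw [intervalIntegral.integral_comp_add_right]; norm_num
    rw [h]; exact aux_shift hint hmono zero_le_one zero_le_one
  have e5 : ∫ y in (-1:ℝ)..1, φ y
      = (∫ y in (-1:ℝ)..(0:ℝ), φ y) + ∫ y in (0:ℝ)..1, φ y :=
    (intervalIntegral.integral_add_adjacent_intervals hint.intervalIntegrable
      hint.intervalIntegrable).symm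
  have e6 : ∫ y in (-1:ℝ)..(0:ℝ), φ y = ∫ y in (0:ℝ)..1, φ y := by
    simpa using aux_neg hsym 0 1
  linarith

lemma aux_nu (hnn : ∀ x, 0 ≤ φ x) (hint : Integrable φ) {σ : ℝ} (hσ : 0 < σ)
    {a b : ℝ} (hab : a ≤ b) :
    ((volume.withDensity (fun y => ENNReal.ofReal ((1 / σ) * φ (y / σ))))
      (Set.Icc a b)).toReal = ∫ y in (a/σ)..(b/σ), φ y := by
  have hI : Integrable (fun y => (1/σ) * φ (y / σ)) :=
    (hint.comp_div hσ.ne').const_mul _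
  have hnn' : ∀ y, 0 ≤ (1/σ) * φ (y / σ) := fun y => mul_nonneg (by positivity) (hnn _)
  rw [withDensity_apply _ measurableSet_Icc,
    ← ofReal_integral_eq_lintegral_ofReal hI.integrableOn
      (Filter.Eventually.of_forall hnn'),
    ENNReal.toReal_ofReal (setIntegral_nonneg measurableSet_Icc fun y _ => hnn' y),
    integral_Icc_eq_integral_Ioc, ← intervalIntegral.integral_of_le hab,
    intervalIntegral.integral_const_mul, intervalIntegral.integral_comp_div _ hσ.ne']
  simp only [smul_eq_mul]
  field_simp

end aux
theorem stmt_13 (φ : ℝ → ℝ) (hnn : ∀ x, 0 ≤ φ x) (hint : Integrable φ)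
    (hprob : ∫ x, φ x = 1) (hsym : ∀ x, φ (-x) = φ x)
    (hmono : AntitoneOn φ (Set.Ici 0)) (hvar : ∫ x, x ^ 2 * φ x = 1)
    (n : ℕ) (σ : ℕ → ℝ) (hpos : ∀ i ∈ Icc 1 n, 0 < σ i)
    (hsorted : ∀ i ∈ Icc 1 n, ∀ j ∈ Icc 1 n, i ≤ j → σ i ≤ σ j)
    (s : ℝ) (hs : 0 < s)
    (m : ℕ) (hm1 : 1 ≤ m) (hmn : m ≤ n) (hms : σ m ≤ s)
    (hmax : ∀ i ∈ Icc 1 n, m < i → s < σ i)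
    (ν : ℕ → Measure ℝ)
    (hν : ∀ i ∈ Icc 1 n,
      ν i = volume.withDensity (fun y => ENNReal.ofReal ((1 / σ i) * φ (y / σ i)))) :
    ∀ x : ℝ, (1 + Real.sqrt (2 / ∫ y in (-1 : ℝ)..1, φ y)) * s ≤ |x| →
      ∑ i ∈ Icc 1 n, (ν i (Set.Icc (x - s) (x + s))).toReal ≤
        (m : ℝ) * (∫ y in (-1 : ℝ)..1, φ y) / 2 +
          ∑ i ∈ Icc (m + 1) n, (ν i (Set.Icc (-s) s)).toReal := by
  intro x hx
  set Φ1 : ℝ := ∫ y in (-1 : ℝ)..1, φ y with hΦ1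
  have hΦpos : 0 < Φ1 := aux_phi_pos hnn hint hprob hsym hmono hvar
  set r : ℝ := Real.sqrt (2 / Φ1) with hr
  have hrpos : 0 < r := Real.sqrt_pos.mpr (div_pos two_pos hΦpos)
  have hr2 : r ^ 2 = 2 / Φ1 := Real.sq_sqrt (le_of_lt (div_pos two_pos hΦpos))
  set u := |x| with hu
  have hus : (1 + r) * s ≤ u := hx
  have hu0 : 0 ≤ u := abs_nonneg x
  have hmmem : m ∈ Icc 1 n := by simp only [Finset.mem_Icc]; exact ⟨hm1, hmn⟩
  have key : ∀ i ∈ Icc 1 n, (ν i (Set.Icc (x - s) (x + s))).toReal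
      = ∫ y in ((u - s)/σ i)..((u + s)/σ i), φ y := by
    intro i hi
    have hσi : 0 < σ i := hpos i hi
    rw [hν i hi, aux_nu hnn hint hσi (by linarith)]
    rcases abs_cases x with ⟨h1, _⟩ | ⟨h1, _⟩
    · rw [hu, h1]
    · rw [hu, h1]
      have e1 : (x - s)/σ i = -((-x + s)/σ i) := by ring
      have e2 : (x + s)/σ i = -((-x - s)/σ i) := by ring
      rw [e1, e2, aux_neg hsym]
  have hsum : ∑ i ∈ Icc 1 n, (ν i (Set.Icc (x - s) (x + s))).toReal
      = (∑ i ∈ Icc 1 m, (ν i (Set.Icc (x - s) (x + s))).toReal)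
        + ∑ i ∈ Icc (m + 1) n, (ν i (Set.Icc (x - s) (x + s))).toReal := by
    rw [(id (Finset.Icc_add_one_left_eq_Ioc 0 n) : Icc 1 n = Ioc 0 n), Finset.Icc_add_one_left_eq_Ioc m n,
      (id (Finset.Icc_add_one_left_eq_Ioc 0 m) : Icc 1 m = Ioc 0 m)]
    exact (Finset.sum_Ioc_consecutive _ (Nat.zero_le m) hmn).symm
  rw [hsum]
  apply add_le_add
  · have hb : ∀ i ∈ Icc 1 m, (ν i (Set.Icc (x - s) (x + s))).toReal ≤ Φ1 / 2 := by
      intro i hi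
      simp only [Finset.mem_Icc] at hi
      have him : i ∈ Icc 1 n := by
        simp only [Finset.mem_Icc]; exact ⟨hi.1, le_trans hi.2 hmn⟩
      have hσi : 0 < σ i := hpos i him
      have hσis : σ i ≤ s := le_trans (hsorted i him m hmmem hi.2) hms
      rw [key i him]
      have hA : r ≤ (u - s)/σ i := by
        rw [le_div_iff₀ hσi]
        nlinarith [mul_le_mul_of_nonneg_left hσis hrpos.le]
      have hAB : (u - s)/σ i ≤ (u + s)/σ i :=
        (div_le_div_iff_of_pos_right hσi).mpr (by linarith)
      calc ∫ y in ((u - s)/σ i)..((u + s)/σ i), φ y ≤ 1 / r ^ 2 :=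
            aux_cheb hnn hint hvar hrpos hA hAB
        _ = Φ1 / 2 := by rw [hr2, one_div_div]
    calc ∑ i ∈ Icc 1 m, (ν i (Set.Icc (x - s) (x + s))).toReal
        ≤ ∑ _i ∈ Icc 1 m, Φ1 / 2 := Finset.sum_le_sum hb
      _ = (m : ℝ) * Φ1 / 2 := by
          rw [Finset.sum_const, Nat.card_Icc]
          simp only [Nat.add_sub_cancel, nsmul_eq_mul]
          ring
  · apply Finset.sum_le_sum
    intro i hi
    simp only [Finset.mem_Icc] at hi
    have him : i ∈ Icc 1 n := by
      simp only [Finset.mem_Icc]; exact ⟨le_trans (by omega) hi.1, hi.2⟩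
    have hσi : 0 < σ i := hpos i him
    have hσs : s < σ i := hmax i him (by omega)
    rw [key i him, hν i him, aux_nu hnn hint hσi (by linarith)]
    have e : (u + s)/σ i = (u - s)/σ i + 2 * (s / σ i) := by field_simp; ring
    have e2 : (-s)/σ i = -(s/σ i) := by ring
    rw [e, e2]
    exact aux_centered hint hsym hmono
      (div_nonneg (by nlinarith) hσi.le) (div_nonneg hs.le hσi.le)
end
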